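/- arXiv:1207.3214 — 5 statements merged into one kernel-verified Lean document; each statement's English description precedes it below -/
import Mathlib

section
/- For positive definite Hermitian matrices A, B, the Thompson metric satisfies d_T(A,B) = ‖log(B^{-1/2} A B^{-1/2})‖, where ‖·‖ denotes the maximum absolute value of the eigenvalues (operator norm of the Hermitian matrix). -/
open scoped ComplexOrder

/-- `Mmat A B = inf {t > 0 : t • B - A` positive definite `}`. -/
noncomputable def Mmat {n : ℕ} (A B : Matrix (Fin n) (Fin n) ℂ) : ℝ :=
  sInf {t : ℝ | 0 < t ∧ (t • B - A).PosDef}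

/-- The Thompson metric `d_T(A,B) = log max(M(A,B), M(B,A))`. -/
noncomputable def dThompson {n : ℕ} (A B : Matrix (Fin n) (Fin n) ℂ) : ℝ :=
  Real.log (max (Mmat A B) (Mmat B A))

/-- The positive semidefinite square root of a positive semidefinite matrix
(Mathlib's former `Matrix.PosSemidef.sqrt`, removed since; restored with its old value). -/
noncomputable def Matrix.PosSemidef.sqrt {𝕜 : Type*} [RCLike 𝕜] {n : Type*} [Fintype n]
    [DecidableEq n] {A : Matrix n n 𝕜} (hA : A.PosSemidef) : Matrix n n 𝕜 :=
  hA.1.eigenvectorUnitary.1 * Matrix.diagonal ((↑) ∘ (√·) ∘ hA.1.eigenvalues) *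
    (star hA.1.eigenvectorUnitary : Matrix n n 𝕜)

/-! Congruence by `S⁻¹`, where `S = B^{1/2}`, preserves positive definiteness and turns
`t • B - A` into `t - C` and `t • A - B` into `t • C - 1`, with `C = S⁻¹ A S⁻¹`. Diagonalizing `C`,
the first is positive definite iff `t` exceeds every eigenvalue `μᵢ` of `C`, the second iff `t`
exceeds every `μᵢ⁻¹`. Hence `M(A,B) = max μᵢ` and `M(B,A) = max μᵢ⁻¹`, and
`log (max (max μᵢ) (max μᵢ⁻¹)) = max |log μᵢ|`. -/

namespace Matrix

variable {𝕜 m : Type*} [RCLike 𝕜] [Fintype m] [DecidableEq m]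

theorem PosSemidef.sqrt_mul_self {A : Matrix m m 𝕜} (hA : A.PosSemidef) :
    hA.sqrt * hA.sqrt = A := by
  conv_rhs => rw [hA.1.spectral_theorem]
  rw [PosSemidef.sqrt, ← Unitary.conjStarAlgAut_apply (S := 𝕜), ← map_mul, diagonal_mul_diagonal]
  congr 2
  ext i
  simp [← RCLike.ofReal_mul, Real.mul_self_sqrt (hA.eigenvalues_nonneg i)]

theorem PosDef.posDef_sqrt {A : Matrix m m 𝕜} (hA : A.PosDef) : hA.posSemidef.sqrt.PosDef := by
  rw [PosSemidef.sqrt, IsUnit.posDef_star_right_conjugate_iff Unitary.isUnit_coe,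
    posDef_diagonal_iff]
  intro i
  simpa using hA.eigenvalues_pos i

theorem IsHermitian.posDef_smul_add_smul_one_iff {C : Matrix m m 𝕜} (hC : C.IsHermitian)
    (a b : ℝ) : (a • C + b • (1 : Matrix m m 𝕜)).PosDef ↔ ∀ i, 0 < a * hC.eigenvalues i + b := by
  have hdiag :
      (a : 𝕜) • diagonal (RCLike.ofReal ∘ hC.eigenvalues) + (b : 𝕜) • (1 : Matrix m m 𝕜) =
        diagonal fun i => ((a * hC.eigenvalues i + b : ℝ) : 𝕜) := by
    ext i j
    rcases eq_or_ne i j with rfl | hij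
    · simp [RCLike.real_smul_eq_coe_mul]
    · simp [hij]
  conv_lhs => rw [hC.spectral_theorem,
    ← map_one (Unitary.conjStarAlgAut 𝕜 _ hC.eigenvectorUnitary),
    RCLike.real_smul_eq_coe_smul (K := 𝕜) a, RCLike.real_smul_eq_coe_smul (K := 𝕜) b]
  rw [← map_smul, ← map_smul, ← map_add, hdiag, Unitary.conjStarAlgAut_apply,
    IsUnit.posDef_star_right_conjugate_iff Unitary.isUnit_coe, posDef_diagonal_iff]
  simp only [RCLike.ofReal_pos]

theorem PosDef.posDef_inv_mul_mul_inv_iff {S : Matrix m m 𝕜} (hS : S.PosDef) {X : Matrix m m 𝕜} :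
    (S⁻¹ * X * S⁻¹).PosDef ↔ X.PosDef := by
  have hSinv : star S⁻¹ = S⁻¹ := by
    rw [star_eq_conjTranspose, conjTranspose_nonsing_inv, hS.1.eq]
  simpa only [hSinv] using
    IsUnit.posDef_star_left_conjugate_iff (x := X) (isUnit_nonsing_inv_iff.mpr hS.isUnit)

theorem nonsing_inv_mul_mul_self_mul_nonsing_inv {S : Matrix m m 𝕜} (hS : IsUnit S) :
    S⁻¹ * (S * S) * S⁻¹ = 1 := by
  have hdet := (isUnit_iff_isUnit_det S).mp hS
  rw [← Matrix.mul_assoc, nonsing_inv_mul S hdet, Matrix.one_mul, mul_nonsing_inv S hdet]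

section Congruence

variable {S A B : Matrix m m 𝕜} (hS : S.PosDef) (hSB : S * S = B)
  (hC : (S⁻¹ * A * S⁻¹).IsHermitian)
include hS hSB

theorem posDef_smul_sub_iff_eigenvalues_lt (t : ℝ) :
    (t • B - A).PosDef ↔ ∀ i, hC.eigenvalues i < t := by
  have hconj :
      S⁻¹ * (t • B - A) * S⁻¹ = (-1 : ℝ) • (S⁻¹ * A * S⁻¹) + t • (1 : Matrix m m 𝕜) := by
    rw [Matrix.mul_sub, Matrix.sub_mul, Matrix.mul_smul, Matrix.smul_mul, ← hSB,
      nonsing_inv_mul_mul_self_mul_nonsing_inv hS.isUnit, neg_one_smul, neg_add_eq_sub]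
  rw [← hS.posDef_inv_mul_mul_inv_iff, hconj, hC.posDef_smul_add_smul_one_iff]
  simp only [neg_one_mul, ← sub_eq_neg_add, sub_pos]

theorem posDef_smul_sub_swap_iff_one_lt_mul_eigenvalues (t : ℝ) :
    (t • A - B).PosDef ↔ ∀ i, 1 < t * hC.eigenvalues i := by
  have hconj :
      S⁻¹ * (t • A - B) * S⁻¹ = t • (S⁻¹ * A * S⁻¹) + (-1 : ℝ) • (1 : Matrix m m 𝕜) := by
    rw [Matrix.mul_sub, Matrix.sub_mul, Matrix.mul_smul, Matrix.smul_mul, ← hSB,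
      nonsing_inv_mul_mul_self_mul_nonsing_inv hS.isUnit, neg_one_smul, sub_eq_add_neg]
  rw [← hS.posDef_inv_mul_mul_inv_iff, hconj, hC.posDef_smul_add_smul_one_iff]
  simp only [← sub_eq_add_neg, sub_pos]

end Congruence

end Matrix

theorem Real.sInf_setOf_pos_and_forall_lt {ι : Type*} [Finite ι] {f : ι → ℝ}
    (hf : ∀ i, 0 ≤ f i) : sInf {t : ℝ | 0 < t ∧ ∀ i, f i < t} = ⨆ i, f i := by
  suffices {t : ℝ | 0 < t ∧ ∀ i, f i < t} = Set.Ioi (⨆ i, f i) by rw [this, csInf_Ioi]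
  ext t
  rcases isEmpty_or_nonempty ι with hι | hι
  · simp -- `⨆` over an empty index is `0` in `ℝ`
  obtain ⟨i₀, hi₀⟩ := exists_eq_ciSup_of_finite (f := f)
  rw [Set.mem_ofPred_eq, Set.mem_Ioi, ← hi₀]
  refine ⟨fun ⟨_, h⟩ => h i₀, fun h => ⟨(hf i₀).trans_lt h, fun i => ?_⟩⟩
  exact (hi₀ ▸ le_ciSup (Set.finite_range f).bddAbove i).trans_lt h

theorem Real.log_max_iSup_iSup_inv {ι : Type*} [Finite ι] {f : ι → ℝ} (hf : ∀ i, 0 < f i) :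
    Real.log (max (⨆ i, f i) (⨆ i, (f i)⁻¹)) = ⨆ i, |Real.log (f i)| := by
  rcases isEmpty_or_nonempty ι with hι | hι
  · simp
  have hexp (i : ι) : Real.exp |Real.log (f i)| = max (f i) (f i)⁻¹ := by
    rw [abs_eq_max_neg, Real.exp_monotone.map_max, ← Real.log_inv, Real.exp_log (hf i),
      Real.exp_log (inv_pos.mpr (hf i))]
  calc Real.log (max (⨆ i, f i) (⨆ i, (f i)⁻¹))
      = Real.log (⨆ i, Real.exp |Real.log (f i)|) := by
        simp_rw [hexp, ← ciSup_sup_eq (Set.finite_range _).bddAbove (Set.finite_range _).bddAbove]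
    _ = ⨆ i, |Real.log (f i)| := by
        rw [← Real.exp_monotone.map_ciSup_of_continuousAt Real.continuous_exp.continuousAt
          (Set.finite_range _).bddAbove, Real.log_exp]

section Thompson

variable {n : ℕ} {A B : Matrix (Fin n) (Fin n) ℂ} (hA : A.PosDef) (hB : B.PosDef)
  (hT : (hB.posSemidef.sqrt⁻¹ * A * hB.posSemidef.sqrt⁻¹).IsHermitian)
include hA

theorem posDef_sqrt_inv_mul_mul_sqrt_inv :
    (hB.posSemidef.sqrt⁻¹ * A * hB.posSemidef.sqrt⁻¹).PosDef :=
  hB.posDef_sqrt.posDef_inv_mul_mul_inv_iff.mpr hA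

theorem Mmat_eq_iSup_eigenvalues : Mmat A B = ⨆ i, hT.eigenvalues i := by
  have hμ := (posDef_sqrt_inv_mul_mul_sqrt_inv hA hB).eigenvalues_pos
  simp_rw [Mmat, Matrix.posDef_smul_sub_iff_eigenvalues_lt hB.posDef_sqrt
    hB.posSemidef.sqrt_mul_self hT]
  exact Real.sInf_setOf_pos_and_forall_lt fun i => (hμ i).le

theorem Mmat_swap_eq_iSup_inv_eigenvalues : Mmat B A = ⨆ i, (hT.eigenvalues i)⁻¹ := by
  have hμ := (posDef_sqrt_inv_mul_mul_sqrt_inv hA hB).eigenvalues_pos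
  simp_rw [Mmat, Matrix.posDef_smul_sub_swap_iff_one_lt_mul_eigenvalues hB.posDef_sqrt
    hB.posSemidef.sqrt_mul_self hT, ← inv_lt_iff_one_lt_mul₀ (hμ _)]
  exact Real.sInf_setOf_pos_and_forall_lt fun i => (inv_pos.mpr (hμ i)).le

end Thompson

theorem dThompson_eq_spectral_norm_log_general {n : ℕ}
    (A B : Matrix (Fin n) (Fin n) ℂ) (hA : A.PosDef) (hB : B.PosDef)
    (hT : (hB.posSemidef.sqrt⁻¹ * A * hB.posSemidef.sqrt⁻¹).IsHermitian) :
    dThompson A B = ⨆ i, |Real.log (hT.eigenvalues i)| := by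
  rw [dThompson, Mmat_eq_iSup_eigenvalues hA hB hT, Mmat_swap_eq_iSup_inv_eigenvalues hA hB hT,
    Real.log_max_iSup_iSup_inv (posDef_sqrt_inv_mul_mul_sqrt_inv hA hB).eigenvalues_pos]

/-- For positive definite Hermitian matrices `A, B`, the Thompson metric equals
`‖log (B^{-1/2} A B^{-1/2})‖`, the maximum of the absolute values of the logarithms
of the eigenvalues of `B^{-1/2} A B^{-1/2}`. -/
theorem dThompson_eq_spectral_norm_log {n : ℕ} (hn : 0 < n)
    (A B : Matrix (Fin n) (Fin n) ℂ) (hA : A.PosDef) (hB : B.PosDef)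
    (hT : (hB.posSemidef.sqrt⁻¹ * A * hB.posSemidef.sqrt⁻¹).IsHermitian) :
    dThompson A B = ⨆ i, |Real.log (hT.eigenvalues i)| :=
  dThompson_eq_spectral_norm_log_general A B hA hB hT
end

section
/- For a Hermitian matrix u, the curve t ↦ exp(tu) is a constant-speed geodesic for the Thompson metric on positive definite matrices: d_T(exp(su), exp(tu)) = |t - s|·‖u‖, where ‖u‖ is the maximal absolute value of the eigenvalues of u. -/
open scoped ComplexOrder

/-!
`exp (s u)` and `exp (t u)` are functions of the same Hermitian matrix `u`, hence simultaneously
diagonal in an eigenbasis of `u`. So `c • exp (t u) - exp (s u)` is positive definite exactly when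
`exp ((s - t) λᵢ) < c` for every eigenvalue `λᵢ`, which gives
`M(exp (s u), exp (t u)) = exp (maxᵢ (s - t) λᵢ)`. Taking the larger of the two exponents
`maxᵢ (s - t) λᵢ` and `maxᵢ (t - s) λᵢ` gives `maxᵢ |t - s| |λᵢ|`.
-/

open scoped MatrixOrder

lemma Real.exp_ciSup {ι : Type*} [Finite ι] [Nonempty ι] (f : ι → ℝ) :
    Real.exp (⨆ i, f i) = ⨆ i, Real.exp (f i) :=
  Real.exp_monotone.map_ciSup_of_continuousAt Real.continuous_exp.continuousAt
    (Finite.bddAbove_range f)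

lemma Real.max_ciSup_ciSup_neg {ι : Type*} [Finite ι] (f : ι → ℝ) :
    max (⨆ i, f i) (⨆ i, -f i) = ⨆ i, |f i| := by
  simp_rw [abs_eq_max_neg]
  exact (ciSup_sup_eq (Finite.bddAbove_range _) (Finite.bddAbove_range _)).symm

namespace Matrix.IsHermitian

variable {ι : Type*} [Fintype ι] [DecidableEq ι]

-- Any matrix norm would do: `NormedSpace.exp` depends only on the topology.
open scoped Matrix.Norms.L2Operator in
lemma exp_smul_eq_cfc {u : Matrix ι ι ℂ} (hu : u.IsHermitian) (r : ℝ) :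
    NormedSpace.exp (r • u) = cfc (fun x => Real.exp (r * x)) u := by
  rw [← CFC.real_exp_eq_normedSpace_exp ((IsSelfAdjoint.all r).smul hu.isSelfAdjoint),
    ← cfc_comp_smul r Real.exp u Real.continuous_exp.continuousOn hu.isSelfAdjoint]
  rfl

variable {𝕜 : Type*} [RCLike 𝕜] {u : Matrix ι ι 𝕜}

lemma posDef_cfc_iff (hu : u.IsHermitian) (f : ℝ → ℝ) :
    (cfc f u).PosDef ↔ ∀ i, 0 < f (hu.eigenvalues i) := by
  rw [← isStrictlyPositive_iff_posDef, cfc_isStrictlyPositive_iff f u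
    (u.finite_real_spectrum.continuousOn f), hu.spectrum_real_eq_range_eigenvalues,
    Set.forall_mem_range]

lemma smul_cfc_sub_cfc_posDef_iff (hu : u.IsHermitian) {f g : ℝ → ℝ}
    (hg : ∀ i, 0 < g (hu.eigenvalues i)) (c : ℝ) :
    (c • cfc g u - cfc f u).PosDef ↔ ∀ i, f (hu.eigenvalues i) / g (hu.eigenvalues i) < c := by
  have hcont (h : ℝ → ℝ) : ContinuousOn h (spectrum ℝ u) := u.finite_real_spectrum.continuousOn h
  rw [← cfc_smul c g u (hcont g), ← cfc_sub _ _ u (hcont _) (hcont f), posDef_cfc_iff hu]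
  refine forall_congr' fun i => ?_
  rw [div_lt_iff₀ (hg i), smul_eq_mul, sub_pos]

end Matrix.IsHermitian

lemma Mmat_cfc {n : ℕ} [Nonempty (Fin n)] {u : Matrix (Fin n) (Fin n) ℂ} (hu : u.IsHermitian)
    {f g : ℝ → ℝ} (hf : ∀ i, 0 < f (hu.eigenvalues i)) (hg : ∀ i, 0 < g (hu.eigenvalues i)) :
    Mmat (cfc f u) (cfc g u) = ⨆ i, f (hu.eigenvalues i) / g (hu.eigenvalues i) := by
  set r := fun i => f (hu.eigenvalues i) / g (hu.eigenvalues i)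
  have forall_lt_iff (c : ℝ) : (∀ i, r i < c) ↔ ⨆ i, r i < c := by
    refine ⟨fun h => ?_, fun h i => (Finite.le_ciSup r i).trans_lt h⟩
    obtain ⟨i, hi⟩ := exists_eq_ciSup_of_finite (f := r)
    exact hi ▸ h i
  have hset : {c : ℝ | 0 < c ∧ (c • cfc g u - cfc f u).PosDef} = Set.Ioi (⨆ i, r i) := by
    ext c
    rw [Set.mem_Ioi, ← forall_lt_iff, Set.mem_ofPred_eq, hu.smul_cfc_sub_cfc_posDef_iff hg]
    obtain ⟨i⟩ := ‹Nonempty (Fin n)›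
    exact and_iff_right_of_imp fun h => (div_pos (hf i) (hg i)).trans (h i)
  rw [Mmat, hset, csInf_Ioi]

lemma Mmat_exp_smul {n : ℕ} [Nonempty (Fin n)] {u : Matrix (Fin n) (Fin n) ℂ}
    (hu : u.IsHermitian) (s t : ℝ) :
    Mmat (NormedSpace.exp (s • u)) (NormedSpace.exp (t • u)) =
      Real.exp (⨆ i, (s - t) * hu.eigenvalues i) := by
  rw [hu.exp_smul_eq_cfc, hu.exp_smul_eq_cfc, Mmat_cfc hu (fun _ => Real.exp_pos (s * _))
    (fun _ => Real.exp_pos (t * _)), Real.exp_ciSup]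
  simp_rw [← Real.exp_sub, ← sub_mul]

/-- For a Hermitian matrix `u`, the curve `t ↦ exp (t u)` is a constant speed
geodesic for the Thompson metric:
`d_T(exp (s u), exp (t u)) = |t - s| * ‖u‖`, where `‖u‖` is the maximal absolute
value of the eigenvalues of `u`. -/
theorem dThompson_exp_geodesic {n : ℕ} (hn : 0 < n)
    (u : Matrix (Fin n) (Fin n) ℂ) (hu : u.IsHermitian) (s t : ℝ) :
    dThompson (NormedSpace.exp (s • u)) (NormedSpace.exp (t • u)) =
      |t - s| * ⨆ i, |hu.eigenvalues i| := by
  have : Nonempty (Fin n) := Fin.pos_iff_nonempty.mp hn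
  rw [dThompson, Mmat_exp_smul hu, Mmat_exp_smul hu, ← Real.exp_monotone.map_max, Real.log_exp,
    ← neg_sub s t]
  simp_rw [neg_mul, Real.max_ciSup_ciSup_neg, abs_mul, abs_neg]
  exact (Real.mul_iSup_of_nonneg (abs_nonneg _) _).symm
end

section
/- For trace-zero Hermitian matrices u, v, the rescaled Hilbert distance satisfies lim_{λ→0⁺} d_H(exp(λu), exp(λv))/λ = λ_max(v-u) - λ_min(v-u). -/
open scoped ComplexOrder

/-- The Hilbert pseudo-metric `d_H(A,B) = log (M(A,B) · M(B,A))`. -/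
noncomputable def dHilbert {n : ℕ} (A B : Matrix (Fin n) (Fin n) ℂ) : ℝ :=
  Real.log (Mmat A B * Mmat B A)

/-! In the eigenbasis of a Hermitian `w`, the Rayleigh quotient of `exp (l • w)` at `x` is an
average of the `exp (l * λᵢ)` with weights determined by `x`. Jensen's inequality and
`exp t ≤ 1 + t + t²` for `|t| ≤ 1` squeeze it between `exp (l * R)` and `exp (l * R + (l * K)²)`,
where `R` is the Rayleigh quotient of `w` at `x` and `K` bounds the eigenvalues of `w`.
Since `M(A, B)` is the largest ratio of the Rayleigh quotients of `A` and `B`, this gives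
`log M(exp (l • u), exp (l • v)) = -l * λ_min (v - u) + O(l²)` and
`log M(exp (l • v), exp (l • u)) = l * λ_max (v - u) + O(l²)`. -/

open Matrix Filter Topology

variable {ι : Type*}

lemma Real.exp_sum_mul_le_sum_mul_exp (s : Finset ι) {p a : ι → ℝ} (hp : ∀ i ∈ s, 0 ≤ p i)
    (hp1 : ∑ i ∈ s, p i = 1) : Real.exp (∑ i ∈ s, p i * a i) ≤ ∑ i ∈ s, p i * Real.exp (a i) :=
  convexOn_exp.map_sum_le hp hp1 fun i _ => Set.mem_univ (a i)

lemma Real.sum_mul_exp_le_exp_sum_mul_add_sq (s : Finset ι) {p a : ι → ℝ} {δ : ℝ}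
    (hp : ∀ i ∈ s, 0 ≤ p i) (hp1 : ∑ i ∈ s, p i = 1) (ha : ∀ i ∈ s, |a i| ≤ δ) (hδ : δ ≤ 1) :
    ∑ i ∈ s, p i * Real.exp (a i) ≤ Real.exp (∑ i ∈ s, p i * a i + δ ^ 2) := by
  have hexp : ∀ i ∈ s, Real.exp (a i) ≤ 1 + a i + δ ^ 2 := fun i hi => by
    have hsq : a i ^ 2 ≤ δ ^ 2 := sq_le_sq' (abs_le.mp (ha i hi)).1 (abs_le.mp (ha i hi)).2
    have := (abs_le.mp (Real.abs_exp_sub_one_sub_id_le ((ha i hi).trans hδ))).2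
    linarith
  calc ∑ i ∈ s, p i * Real.exp (a i) ≤ ∑ i ∈ s, p i * (1 + a i + δ ^ 2) :=
        Finset.sum_le_sum fun i hi => mul_le_mul_of_nonneg_left (hexp i hi) (hp i hi)
    _ = ∑ i ∈ s, p i * a i + δ ^ 2 + 1 := by
        simp only [mul_add, mul_one, Finset.sum_add_distrib, ← Finset.sum_mul, hp1]
        ring
    _ ≤ Real.exp (∑ i ∈ s, p i * a i + δ ^ 2) := Real.add_one_le_exp _

lemma Real.pos_and_abs_log_sub_le_of_mem_Icc {M a e : ℝ}
    (h : M ∈ Set.Icc (Real.exp (a - e)) (Real.exp (a + e))) :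
    0 < M ∧ |Real.log M - a| ≤ e := by
  have hM : 0 < M := (Real.exp_pos _).trans_le h.1
  refine ⟨hM, abs_sub_le_iff.mpr ⟨?_, ?_⟩⟩
  · linarith [(Real.log_le_iff_le_exp hM).mpr h.2]
  · linarith [(Real.le_log_iff_exp_le hM).mpr h.1]

lemma tendsto_div_nhdsGT_zero_of_abs_sub_mul_le {f : ℝ → ℝ} {a C : ℝ}
    (h : ∀ᶠ l in 𝓝[>] 0, |f l - l * a| ≤ C * l ^ 2) :
    Tendsto (fun l => f l / l) (𝓝[>] 0) (𝓝 a) := by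
  rw [tendsto_iff_norm_sub_tendsto_zero]
  refine squeeze_zero' (Eventually.of_forall fun _ => norm_nonneg _) ?_
    (((continuous_const_mul C).tendsto' 0 0 (mul_zero C)).mono_left nhdsWithin_le_nhds)
  filter_upwards [h, self_mem_nhdsWithin] with l hl (hl0 : 0 < l)
  rw [Real.norm_eq_abs, div_sub' hl0.ne', abs_div, abs_of_pos hl0, div_le_iff₀ hl0]
  linarith [show C * l ^ 2 = C * l * l by ring]

namespace Matrix

variable [Fintype ι]

noncomputable def rayleigh (A : Matrix ι ι ℂ) (x : ι → ℂ) : ℝ :=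
  (star x ⬝ᵥ (A *ᵥ x)).re / (star x ⬝ᵥ x).re

lemma re_star_dotProduct_self_pos {x : ι → ℂ} (hx : x ≠ 0) : 0 < (star x ⬝ᵥ x).re :=
  (Complex.pos_iff.mp (dotProduct_star_self_pos_iff.mpr hx)).1

lemma rayleigh_sub (A B : Matrix ι ι ℂ) (x : ι → ℂ) :
    rayleigh (A - B) x = rayleigh A x - rayleigh B x := by
  simp only [rayleigh, sub_mulVec, dotProduct_sub, Complex.sub_re, sub_div]

lemma rayleigh_smul (t : ℝ) (A : Matrix ι ι ℂ) (x : ι → ℂ) :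
    rayleigh (t • A) x = t * rayleigh A x := by
  simp only [rayleigh, smul_mulVec, dotProduct_smul, Complex.real_smul, Complex.re_ofReal_mul,
    mul_div_assoc]

lemma posDef_iff_rayleigh_pos {M : Matrix ι ι ℂ} :
    M.PosDef ↔ M.IsHermitian ∧ ∀ x ≠ 0, 0 < rayleigh M x := by
  refine posDef_iff_dotProduct_mulVec.trans
    (and_congr_right fun hM => forall₂_congr fun x hx => ?_)
  rw [rayleigh, div_pos_iff_of_pos_right (re_star_dotProduct_self_pos hx), RCLike.pos_iff,
    hM.im_star_dotProduct_mulVec_self]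
  exact and_iff_left rfl

lemma PosDef.rayleigh_pos {M : Matrix ι ι ℂ} (hM : M.PosDef) {x : ι → ℂ} (hx : x ≠ 0) :
    0 < rayleigh M x :=
  (posDef_iff_rayleigh_pos.mp hM).2 x hx

lemma rayleigh_of_mulVec_eq_smul {M : Matrix ι ι ℂ} {x : ι → ℂ} {μ : ℝ}
    (h : M *ᵥ x = (μ : ℂ) • x) (hx : x ≠ 0) : rayleigh M x = μ := by
  rw [rayleigh, h, dotProduct_smul, smul_eq_mul, Complex.re_ofReal_mul,
    mul_div_cancel_right₀ _ (re_star_dotProduct_self_pos hx).ne']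

namespace IsHermitian

variable [DecidableEq ι] {w : Matrix ι ι ℂ} (hw : w.IsHermitian)

noncomputable def spectralWeight (x : ι → ℂ) (i : ι) : ℝ :=
  Complex.normSq ((star (hw.eigenvectorUnitary : Matrix ι ι ℂ) *ᵥ x) i) / (star x ⬝ᵥ x).re

lemma star_dotProduct_cfc_mulVec (f : ℝ → ℝ) (x : ι → ℂ) :
    star x ⬝ᵥ (hw.cfc f *ᵥ x) =
      ∑ i, (f (hw.eigenvalues i) : ℂ) *
        Complex.normSq ((star (hw.eigenvectorUnitary : Matrix ι ι ℂ) *ᵥ x) i) := by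
  set U : Matrix ι ι ℂ := hw.eigenvectorUnitary.1
  have hstar : star x ᵥ* U = star (star U *ᵥ x) := by
    rw [star_mulVec, star_eq_conjTranspose, conjTranspose_conjTranspose]
  rw [IsHermitian.cfc, Unitary.conjStarAlgAut_apply, ← mulVec_mulVec, ← mulVec_mulVec,
    dotProduct_mulVec, hstar]
  refine Finset.sum_congr rfl fun i _ => ?_
  simp only [mulVec_diagonal, Pi.star_apply, Function.comp_apply, Complex.star_def,
    Complex.normSq_eq_conj_mul_self, Complex.coe_algebraMap]
  ring

lemma rayleigh_cfc (f : ℝ → ℝ) (x : ι → ℂ) :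
    rayleigh (hw.cfc f) x = ∑ i, hw.spectralWeight x i * f (hw.eigenvalues i) := by
  simp only [rayleigh, star_dotProduct_cfc_mulVec, spectralWeight, Complex.re_sum,
    ← Complex.ofReal_mul, Complex.ofReal_re, Finset.sum_div]
  exact Finset.sum_congr rfl fun i _ => by ring

lemma sum_spectralWeight {x : ι → ℂ} (hx : x ≠ 0) : ∑ i, hw.spectralWeight x i = 1 := by
  have h := hw.rayleigh_cfc (fun _ => 1) x
  rw [← hw.cfc_eq, cfc_const_one ℝ w, rayleigh, one_mulVec,
    div_self (re_star_dotProduct_self_pos hx).ne'] at h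
  simpa using h.symm

lemma spectralWeight_nonneg (x : ι → ℂ) (i : ι) : 0 ≤ hw.spectralWeight x i :=
  div_nonneg (Complex.normSq_nonneg _) (Complex.nonneg_iff.mp (dotProduct_star_self_nonneg x)).1

lemma rayleigh_eq_sum (x : ι → ℂ) :
    rayleigh w x = ∑ i, hw.spectralWeight x i * hw.eigenvalues i := by
  conv_lhs => rw [← cfc_id' ℝ w, hw.cfc_eq]
  exact hw.rayleigh_cfc id x

lemma exp_smul_eq_cfc_s12 (l : ℝ) :
    NormedSpace.exp (l • w) = hw.cfc (fun t => Real.exp (l * t)) := by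
  have hU :
      star (hw.eigenvectorUnitary : Matrix ι ι ℂ) = (hw.eigenvectorUnitary : Matrix ι ι ℂ)⁻¹ :=
    (Matrix.inv_eq_left_inv (Unitary.star_mul_self_of_mem hw.eigenvectorUnitary.2)).symm
  have hUunit : IsUnit (hw.eigenvectorUnitary : Matrix ι ι ℂ) :=
    ⟨Unitary.toUnits hw.eigenvectorUnitary, rfl⟩
  have hl : l • w = hw.cfc (l * ·) := by rw [← hw.cfc_eq, cfc_const_mul_id l w]
  rw [hl, IsHermitian.cfc, IsHermitian.cfc, Unitary.conjStarAlgAut_apply,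
    Unitary.conjStarAlgAut_apply, hU, exp_conj _ _ hUunit, exp_diagonal]
  congr
  funext i
  simp [Complex.ofReal_exp, ← Complex.exp_eq_exp_ℂ]

lemma exp_rayleigh_le_rayleigh_exp_smul (hw : w.IsHermitian) (l : ℝ) {x : ι → ℂ}
    (hx : x ≠ 0) :
    Real.exp (l * rayleigh w x) ≤ rayleigh (NormedSpace.exp (l • w)) x := by
  rw [hw.rayleigh_eq_sum, hw.exp_smul_eq_cfc_s12, hw.rayleigh_cfc, Finset.mul_sum]
  simp_rw [mul_left_comm l]
  exact Real.exp_sum_mul_le_sum_mul_exp _ (fun i _ => hw.spectralWeight_nonneg x i)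
    (hw.sum_spectralWeight hx)

lemma rayleigh_exp_smul_le_exp {l δ : ℝ} (hδ : ∀ i, |l * hw.eigenvalues i| ≤ δ) (hδ1 : δ ≤ 1)
    {x : ι → ℂ} (hx : x ≠ 0) :
    rayleigh (NormedSpace.exp (l • w)) x ≤ Real.exp (l * rayleigh w x + δ ^ 2) := by
  rw [hw.rayleigh_eq_sum, hw.exp_smul_eq_cfc_s12, hw.rayleigh_cfc, Finset.mul_sum]
  simp_rw [mul_left_comm l]
  exact Real.sum_mul_exp_le_exp_sum_mul_add_sq _ (fun i _ => hw.spectralWeight_nonneg x i)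
    (hw.sum_spectralWeight hx) (fun i _ => hδ i) hδ1

lemma iInf_eigenvalues_le_rayleigh {x : ι → ℂ} (hx : x ≠ 0) :
    ⨅ i, hw.eigenvalues i ≤ rayleigh w x := by
  rw [hw.rayleigh_eq_sum]
  calc ⨅ i, hw.eigenvalues i = ∑ i, hw.spectralWeight x i * ⨅ j, hw.eigenvalues j := by
        rw [← Finset.sum_mul, hw.sum_spectralWeight hx, one_mul]
    _ ≤ ∑ i, hw.spectralWeight x i * hw.eigenvalues i :=
        Finset.sum_le_sum fun i _ => mul_le_mul_of_nonneg_left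
          (ciInf_le (Finite.bddBelow_range _) i) (hw.spectralWeight_nonneg x i)

lemma rayleigh_le_iSup_eigenvalues {x : ι → ℂ} (hx : x ≠ 0) :
    rayleigh w x ≤ ⨆ i, hw.eigenvalues i := by
  rw [hw.rayleigh_eq_sum]
  calc ∑ i, hw.spectralWeight x i * hw.eigenvalues i
        ≤ ∑ i, hw.spectralWeight x i * ⨆ j, hw.eigenvalues j :=
        Finset.sum_le_sum fun i _ => mul_le_mul_of_nonneg_left
          (le_ciSup (Finite.bddAbove_range _) i) (hw.spectralWeight_nonneg x i)
    _ = ⨆ i, hw.eigenvalues i := by rw [← Finset.sum_mul, hw.sum_spectralWeight hx, one_mul]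

lemma eigenvectorBasis_ne_zero (i : ι) : ⇑(hw.eigenvectorBasis i) ≠ 0 := by
  simpa using hw.eigenvectorBasis.orthonormal.ne_zero i

lemma rayleigh_eigenvectorBasis (i : ι) :
    rayleigh w (hw.eigenvectorBasis i) = hw.eigenvalues i :=
  rayleigh_of_mulVec_eq_smul (by rw [hw.mulVec_eigenvectorBasis]; rfl)
    (hw.eigenvectorBasis_ne_zero i)

lemma exists_rayleigh_eq_iInf_eigenvalues [Nonempty ι] :
    ∃ x ≠ 0, rayleigh w x = ⨅ i, hw.eigenvalues i := by
  obtain ⟨i, hi⟩ := exists_eq_ciInf_of_finite (f := hw.eigenvalues)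
  exact ⟨_, hw.eigenvectorBasis_ne_zero i, (hw.rayleigh_eigenvectorBasis i).trans hi⟩

lemma exists_rayleigh_eq_iSup_eigenvalues [Nonempty ι] :
    ∃ x ≠ 0, rayleigh w x = ⨆ i, hw.eigenvalues i := by
  obtain ⟨i, hi⟩ := exists_eq_ciSup_of_finite (f := hw.eigenvalues)
  exact ⟨_, hw.eigenvectorBasis_ne_zero i, (hw.rayleigh_eigenvectorBasis i).trans hi⟩

end IsHermitian

end Matrix

section Mmat

variable {n : ℕ} {A B : Matrix (Fin n) (Fin n) ℂ} {s : ℝ}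

lemma smul_sub_posDef_of_rayleigh_le (hA : A.IsHermitian) (hB : B.PosDef)
    (h : ∀ x ≠ 0, rayleigh A x ≤ s * rayleigh B x) {t : ℝ} (hst : s < t) :
    (t • B - A).PosDef := by
  refine posDef_iff_rayleigh_pos.mpr
    ⟨(hB.isHermitian.smul (IsSelfAdjoint.all t)).sub hA, fun x hx => ?_⟩
  rw [rayleigh_sub, rayleigh_smul]
  nlinarith [h x hx, hB.rayleigh_pos hx]

lemma Mmat_le_of_rayleigh_le (hA : A.IsHermitian) (hB : B.PosDef) (hs : 0 ≤ s)
    (h : ∀ x ≠ 0, rayleigh A x ≤ s * rayleigh B x) : Mmat A B ≤ s :=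
  le_of_forall_gt_imp_ge_of_dense fun _ hst =>
    csInf_le ⟨0, fun _ ht => ht.1.le⟩
      ⟨hs.trans_lt hst, smul_sub_posDef_of_rayleigh_le hA hB h hst⟩

lemma le_Mmat_of_le_rayleigh (hne : {t : ℝ | 0 < t ∧ (t • B - A).PosDef}.Nonempty)
    (hB : B.PosDef) {x : Fin n → ℂ} (hx : x ≠ 0) (h : s * rayleigh B x ≤ rayleigh A x) :
    s ≤ Mmat A B := by
  refine le_csInf hne fun t ⟨_, ht⟩ => ?_
  have hpos := ht.rayleigh_pos hx
  rw [rayleigh_sub, rayleigh_smul] at hpos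
  exact le_of_mul_le_mul_right (by linarith) (hB.rayleigh_pos hx)

variable {u v : Matrix (Fin n) (Fin n) ℂ} {l K : ℝ}

lemma Mmat_exp_smul_mem_Icc (hu : u.IsHermitian) (hv : v.IsHermitian) (hl : 0 ≤ l)
    (hlK : l * K ≤ 1) (hKu : ∀ i, |hu.eigenvalues i| ≤ K) (hKv : ∀ i, |hv.eigenvalues i| ≤ K)
    {c : ℝ} (hc : ∀ x ≠ 0, c ≤ rayleigh v x - rayleigh u x)
    (hc₀ : ∃ x ≠ 0, rayleigh v x - rayleigh u x = c) :
    Mmat (NormedSpace.exp (l • u)) (NormedSpace.exp (l • v)) ∈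
      Set.Icc (Real.exp (-(l * c) - (l * K) ^ 2)) (Real.exp (-(l * c) + (l * K) ^ 2)) := by
  have hδ {w : Matrix (Fin n) (Fin n) ℂ} (hw : w.IsHermitian)
      (hKw : ∀ i, |hw.eigenvalues i| ≤ K) (i : Fin n) : |l * hw.eigenvalues i| ≤ l * K := by
    rw [abs_mul, abs_of_nonneg hl]
    exact mul_le_mul_of_nonneg_left (hKw i) hl
  have hA : (NormedSpace.exp (l • u)).IsHermitian := (hu.smul (IsSelfAdjoint.all l)).exp
  have hB : (NormedSpace.exp (l • v)).PosDef := posDef_iff_rayleigh_pos.mpr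
    ⟨(hv.smul (IsSelfAdjoint.all l)).exp,
      fun x hx => (Real.exp_pos _).trans_le (hv.exp_rayleigh_le_rayleigh_exp_smul l hx)⟩
  have hupper : ∀ x ≠ 0, rayleigh (NormedSpace.exp (l • u)) x ≤
      Real.exp (-(l * c) + (l * K) ^ 2) * rayleigh (NormedSpace.exp (l • v)) x := fun x hx =>
    calc rayleigh (NormedSpace.exp (l • u)) x
        ≤ Real.exp (l * rayleigh u x + (l * K) ^ 2) :=
          hu.rayleigh_exp_smul_le_exp (hδ hu hKu) hlK hx
      _ ≤ Real.exp (-(l * c) + (l * K) ^ 2) * Real.exp (l * rayleigh v x) := by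
        rw [← Real.exp_add, Real.exp_le_exp]
        nlinarith [hc x hx]
      _ ≤ Real.exp (-(l * c) + (l * K) ^ 2) * rayleigh (NormedSpace.exp (l • v)) x :=
        mul_le_mul_of_nonneg_left (hv.exp_rayleigh_le_rayleigh_exp_smul l hx) (Real.exp_pos _).le
  obtain ⟨x₀, hx₀, hcx₀⟩ := hc₀
  have hlower : Real.exp (-(l * c) - (l * K) ^ 2) * rayleigh (NormedSpace.exp (l • v)) x₀ ≤
      rayleigh (NormedSpace.exp (l • u)) x₀ :=
    calc Real.exp (-(l * c) - (l * K) ^ 2) * rayleigh (NormedSpace.exp (l • v)) x₀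
        ≤ Real.exp (-(l * c) - (l * K) ^ 2) * Real.exp (l * rayleigh v x₀ + (l * K) ^ 2) :=
          mul_le_mul_of_nonneg_left (hv.rayleigh_exp_smul_le_exp (hδ hv hKv) hlK hx₀)
            (Real.exp_pos _).le
      _ = Real.exp (l * rayleigh u x₀) := by
        rw [← Real.exp_add, ← hcx₀]
        ring_nf
      _ ≤ rayleigh (NormedSpace.exp (l • u)) x₀ := hu.exp_rayleigh_le_rayleigh_exp_smul l hx₀
  have hne :
      {t : ℝ | 0 < t ∧ (t • NormedSpace.exp (l • v) - NormedSpace.exp (l • u)).PosDef}.Nonempty :=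
    ⟨_, by positivity, smul_sub_posDef_of_rayleigh_le hA hB hupper (lt_add_one _)⟩
  exact ⟨le_Mmat_of_le_rayleigh hne hB hx₀ hlower,
    Mmat_le_of_rayleigh_le hA hB (Real.exp_pos _).le hupper⟩

lemma abs_dHilbert_exp_smul_sub_le [Nonempty (Fin n)] (hu : u.IsHermitian)
    (hv : v.IsHermitian) (hl : 0 ≤ l) (hlK : l * K ≤ 1) (hKu : ∀ i, |hu.eigenvalues i| ≤ K)
    (hKv : ∀ i, |hv.eigenvalues i| ≤ K) :
    |dHilbert (NormedSpace.exp (l • u)) (NormedSpace.exp (l • v)) -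
        l * ((⨆ i, (hv.sub hu).eigenvalues i) - ⨅ i, (hv.sub hu).eigenvalues i)| ≤
      2 * K ^ 2 * l ^ 2 := by
  obtain ⟨x₀, hx₀, hmin⟩ := (hv.sub hu).exists_rayleigh_eq_iInf_eigenvalues
  obtain ⟨x₁, hx₁, hmax⟩ := (hv.sub hu).exists_rayleigh_eq_iSup_eigenvalues
  rw [rayleigh_sub] at hmin hmax
  obtain ⟨hM₁, h₁⟩ := Real.pos_and_abs_log_sub_le_of_mem_Icc <|
    Mmat_exp_smul_mem_Icc hu hv hl hlK hKu hKv
      (fun x hx => rayleigh_sub v u x ▸ (hv.sub hu).iInf_eigenvalues_le_rayleigh hx)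
      ⟨x₀, hx₀, hmin⟩
  obtain ⟨hM₂, h₂⟩ := Real.pos_and_abs_log_sub_le_of_mem_Icc <|
    Mmat_exp_smul_mem_Icc hv hu hl hlK hKv hKu (c := -⨆ i, (hv.sub hu).eigenvalues i)
      (fun x hx => by linarith [rayleigh_sub v u x ▸ (hv.sub hu).rayleigh_le_iSup_eigenvalues hx])
      ⟨x₁, hx₁, by linarith⟩
  rw [dHilbert, Real.log_mul hM₁.ne' hM₂.ne', abs_le]
  rw [abs_le] at h₁ h₂
  constructor <;> linarith

end Mmat

theorem dHilbert_rescaled_limit_general {n : ℕ} (hn : 0 < n)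
    (u v : Matrix (Fin n) (Fin n) ℂ) (hu : u.IsHermitian) (hv : v.IsHermitian) :
    Filter.Tendsto
      (fun l : ℝ => dHilbert (NormedSpace.exp (l • u)) (NormedSpace.exp (l • v)) / l)
      (nhdsWithin 0 (Set.Ioi 0))
      (nhds ((⨆ i, (hv.sub hu).eigenvalues i) - ⨅ i, (hv.sub hu).eigenvalues i)) := by
  have : Nonempty (Fin n) := ⟨⟨0, hn⟩⟩
  obtain ⟨K, hK⟩ := Finite.exists_le fun i => max |hu.eigenvalues i| |hv.eigenvalues i|
  have hsmall : ∀ᶠ l in 𝓝[>] (0 : ℝ), l * K < 1 :=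
    ((continuous_mul_const K).tendsto' 0 0 (zero_mul K)).eventually_lt_const one_pos
      |>.filter_mono nhdsWithin_le_nhds
  refine tendsto_div_nhdsGT_zero_of_abs_sub_mul_le (C := 2 * K ^ 2) ?_
  filter_upwards [self_mem_nhdsWithin, hsmall] with l (hl : 0 < l) hlK
  exact abs_dHilbert_exp_smul_sub_le hu hv hl.le hlK.le
    (fun i => le_of_max_le_left (hK i)) (fun i => le_of_max_le_right (hK i))

/-- For trace-zero Hermitian matrices `u, v`, the rescaled Hilbert distance satisfies
`lim_{λ → 0⁺} d_H(exp (λ u), exp (λ v)) / λ = λ_max (v - u) - λ_min (v - u)`. -/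
theorem dHilbert_rescaled_limit {n : ℕ} (hn : 0 < n)
    (u v : Matrix (Fin n) (Fin n) ℂ) (hu : u.IsHermitian) (hv : v.IsHermitian)
    (htru : u.trace = 0) (htrv : v.trace = 0) :
    Filter.Tendsto
      (fun l : ℝ => dHilbert (NormedSpace.exp (l • u)) (NormedSpace.exp (l • v)) / l)
      (nhdsWithin 0 (Set.Ioi 0))
      (nhds ((⨆ i, (hv.sub hu).eigenvalues i) - ⨅ i, (hv.sub hu).eigenvalues i)) :=
  dHilbert_rescaled_limit_general hn u v hu hv
end

section
/- In a Euclidean (formally real) Jordan algebra J, the trace form (x,y) = Trace(L(xy)) (or equivalently the canonical trace of the product xy) is associative: (xz, y) = (x, zy) for all x, y, z ∈ J. -/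
/-- In a Euclidean (formally real) Jordan algebra `J`, the trace form
`⟨x, y⟩ = Trace (L (x * y))` (where `L a` is multiplication by `a`) is associative:
`⟨x * z, y⟩ = ⟨x, z * y⟩` for all `x, y, z`. -/
theorem jordan_trace_form_is_associative
    (J : Type*) [NonAssocRing J] [Module ℝ J]
    [SMulCommClass ℝ J J] [IsScalarTower ℝ J J] [FiniteDimensional ℝ J]
    (hcomm : ∀ a b : J, a * b = b * a)
    (hjordan : ∀ a b : J, a * (b * (a * a)) = (a * b) * (a * a))
    (hformallyreal : ∀ a b : J, a * a + b * b = 0 → a = 0 ∧ b = 0)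
    (x y z : J) :
    LinearMap.trace ℝ J (LinearMap.mulLeft ℝ ((x * z) * y)) =
      LinearMap.trace ℝ J (LinearMap.mulLeft ℝ (x * (z * y))) := by
  -- Full linearization of the Jordan identity
  have hlin : ∀ a b c d : J,
      a*(b*(c*d)) + c*(b*(a*d)) + d*(b*(a*c))
        = (a*b)*(c*d) + (c*b)*(a*d) + (d*b)*(a*c) := by
    intro a b c d
    have h1 := hjordan (a+c+d) b
    have h2 := hjordan (a+c) b
    have h3 := hjordan (a+d) b
    have h4 := hjordan (c+d) b
    have h5 := hjordan a b
    have h6 := hjordan c b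
    have h7 := hjordan d b
    have hz : ((a+c+d)*(b*((a+c+d)*(a+c+d))) - ((a+c+d)*b)*((a+c+d)*(a+c+d)))
        - ((a+c)*(b*((a+c)*(a+c))) - ((a+c)*b)*((a+c)*(a+c)))
        - ((a+d)*(b*((a+d)*(a+d))) - ((a+d)*b)*((a+d)*(a+d)))
        - ((c+d)*(b*((c+d)*(c+d))) - ((c+d)*b)*((c+d)*(c+d)))
        + (a*(b*(a*a)) - (a*b)*(a*a))
        + (c*(b*(c*c)) - (c*b)*(c*c))
        + (d*(b*(d*d)) - (d*b)*(d*d)) = 0 := by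
      rw [h1, h2, h3, h4, h5, h6, h7]; abel
    have key : (a*(b*(c*d)) + c*(b*(a*d)) + d*(b*(a*c))
          - ((a*b)*(c*d) + (c*b)*(a*d) + (d*b)*(a*c)))
        + (a*(b*(c*d)) + c*(b*(a*d)) + d*(b*(a*c))
          - ((a*b)*(c*d) + (c*b)*(a*d) + (d*b)*(a*c))) = 0 := by
      rw [← hz]
      simp only [mul_add, add_mul]
      simp only [hcomm]
      abel
    have h2r : (2:ℝ) • (a*(b*(c*d)) + c*(b*(a*d)) + d*(b*(a*c))
        - ((a*b)*(c*d) + (c*b)*(a*d) + (d*b)*(a*c))) = 0 := by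
      rw [two_smul]; exact key
    exact sub_eq_zero.mp ((smul_eq_zero.mp h2r).resolve_left (by norm_num))
  -- Operator form of the linearized Jordan identity
  set L : J → Module.End ℝ J := fun a => LinearMap.mulLeft ℝ a with hL
  have hop : ∀ a b c : J,
      L a * L b * L c + L c * L b * L a + L (b*(a*c))
        = L (a*b) * L c + L (c*b) * L a + L (a*c) * L b := by
    intro a b c
    ext d
    have : a*(b*(c*d)) + c*(b*(a*d)) + (b*(a*c))*d
        = (a*b)*(c*d) + (c*b)*(a*d) + (a*c)*(b*d) := by
      rw [hcomm (b*(a*c)) d, hcomm b d, hcomm (a*c) (d*b)]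
      exact hlin a b c d
    simpa [hL, LinearMap.mulLeft_apply, Module.End.mul_apply] using this
  have τcyc : ∀ f g h : Module.End ℝ J,
      LinearMap.trace ℝ J (f * g * h) = LinearMap.trace ℝ J (h * f * g) := by
    intro f g h
    rw [LinearMap.trace_mul_comm ℝ (f*g) h, mul_assoc]
  have t1 := congrArg (LinearMap.trace ℝ J) (hop x y z)
  have t2 := congrArg (LinearMap.trace ℝ J) (hop z x y)
  simp only [map_add] at t1 t2
  have c1' : LinearMap.trace ℝ J (L z * L x * L y) = LinearMap.trace ℝ J (L x * L y * L z) := by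
    rw [τcyc (L z) (L x) (L y), τcyc (L y) (L z) (L x)]
  have c2 : LinearMap.trace ℝ J (L y * L x * L z) = LinearMap.trace ℝ J (L z * L y * L x) := by
    rw [τcyc (L y) (L x) (L z), τcyc (L z) (L y) (L x)]
  rw [hcomm z x, hcomm y x] at t2
  rw [hcomm (x*z) y]
  linarith [t1, t2, c1', c2]
end

section
/- The center of a simple Euclidean Jordan algebra J (elements z with z(ab) = (za)b for all a, b) equals R·e, where e is the unit. -/
/-!
For central `z`, commutativity makes left multiplication `L_z` commute with every `L_x`, so the
eigenspaces of `L_z` are ideals; by simplicity an eigenspace for a real eigenvalue `μ` is all of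
`J`, whence `z = z * 1 = μ • 1`. A real eigenvalue exists by formal reality: otherwise the minimal
polynomial of `L_z` has a root `r + b i` with `b ≠ 0`, which yields `u ≠ 0` with
`z' * (z' * u) = -b² • u` for the central element `z' = z - r • 1`, and then
`(z' * u)² + (b • u)² = (z' * (z' * u)) * u + b² • u² = 0` although `b • u ≠ 0`.
-/

open Polynomial

namespace Module.End

theorem exists_ne_zero_aeval_eq_zero_of_dvd_minpoly {K V : Type*} [Field K] [AddCommGroup V]
    [Module K V] [FiniteDimensional K V] {f : End K V} {q : K[X]} (hq : q.Monic)
    (hdeg : 0 < q.natDegree) (hdvd : q ∣ minpoly K f) : ∃ u ≠ (0 : V), aeval f q u = 0 := by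
  obtain ⟨g, hg⟩ := hdvd
  have hint : IsIntegral K f := Algebra.IsIntegral.isIntegral f
  have hg_monic : g.Monic := hq.of_mul_monic_left (hg ▸ minpoly.monic hint)
  have hq_unit : ¬IsUnit q := fun h => hdeg.ne' (natDegree_eq_zero_of_isUnit h)
  have hg_ne : aeval f g ≠ 0 := minpoly.aeval_ne_zero_of_dvdNotUnit_minpoly hint hg_monic
    ⟨hg_monic.ne_zero, q, hq_unit, by rw [hg, mul_comm]⟩
  obtain ⟨a, ha⟩ := DFunLike.ne_iff.mp hg_ne
  refine ⟨aeval f g a, ha, ?_⟩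
  rw [← mul_apply, ← map_mul, ← hg, minpoly.aeval, LinearMap.zero_apply]

theorem exists_hasEigenvalue_or_sq_sub_smul_one_apply {V : Type*} [AddCommGroup V] [Module ℝ V]
    [FiniteDimensional ℝ V] [Nontrivial V] (f : End ℝ V) :
    (∃ μ : ℝ, f.HasEigenvalue μ) ∨
      ∃ a b : ℝ, b ≠ 0 ∧ ∃ u ≠ (0 : V), (f - a • 1) ((f - a • 1) u) = -(b ^ 2) • u := by
  have hint : IsIntegral ℝ f := Algebra.IsIntegral.isIntegral f
  obtain ⟨w, hw⟩ := IsAlgClosed.exists_aeval_eq_zero ℂ (minpoly ℝ f) (minpoly.degree_pos hint).ne'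
  by_cases him : w.im = 0
  · left
    lift w to ℝ using him
    refine ⟨w, hasEigenvalue_of_isRoot ?_⟩
    rwa [← Complex.coe_algebraMap, aeval_algebraMap_apply, map_eq_zero] at hw
  · right
    have hq : (X ^ 2 - C (2 * w.re) * X + C (‖w‖ ^ 2)).Monic := by monicity!
    have hdeg : (X ^ 2 - C (2 * w.re) * X + C (‖w‖ ^ 2)).natDegree = 2 := by compute_degree!
    obtain ⟨u, hu, hqu⟩ := exists_ne_zero_aeval_eq_zero_of_dvd_minpoly hq (by omega)
      ((minpoly ℝ f).quadratic_dvd_of_aeval_eq_zero_im_ne_zero hw him)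
    have hnorm : ‖w‖ ^ 2 = w.re ^ 2 + w.im ^ 2 := by
      rw [Complex.sq_norm, Complex.normSq_apply]; ring
    refine ⟨w.re, w.im, him, u, hu, ?_⟩
    rw [map_add, map_sub, map_mul, map_pow, aeval_X, aeval_C, aeval_C, hnorm] at hqu
    simp only [LinearMap.add_apply, LinearMap.sub_apply, mul_apply, pow_two,
      algebraMap_end_apply, LinearMap.smul_apply, one_apply, map_sub, map_smul] at hqu ⊢
    linear_combination (norm := module) hqu

end Module.End

theorem mul_mul_self_of_central {J : Type*} [Mul J] (hcomm : ∀ a b : J, a * b = b * a) {z : J}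
    (hz : ∀ a b : J, z * (a * b) = z * a * b) (u : J) : z * u * (z * u) = z * (z * u) * u :=
  calc z * u * (z * u) = z * (u * (z * u)) := (hz u (z * u)).symm
    _ = z * (z * u * u) := by rw [hcomm u (z * u)]
    _ = z * (z * u) * u := hz (z * u) u

section CentralElement

variable {J : Type*} [NonAssocRing J] [Module ℝ J] [IsScalarTower ℝ J J]

theorem sub_smul_one_mul_mul {z : J} (hz : ∀ a b : J, z * (a * b) = z * a * b) (r : ℝ)
    (a b : J) : (z - r • 1) * (a * b) = (z - r • 1) * a * b := by
  simp only [sub_mul, hz a b, smul_mul_assoc, one_mul]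

theorem mul_mem_eigenspace_mulLeft [SMulCommClass ℝ J J] (hcomm : ∀ a b : J, a * b = b * a)
    {z : J} (hz : ∀ a b : J, z * (a * b) = z * a * b) (μ : ℝ) (x : J) {a : J}
    (ha : a ∈ Module.End.eigenspace (LinearMap.mulLeft ℝ z) μ) :
    x * a ∈ Module.End.eigenspace (LinearMap.mulLeft ℝ z) μ := by
  rw [Module.End.mem_eigenspace_iff, LinearMap.mulLeft_apply] at ha ⊢
  calc z * (x * a) = z * a * x := by rw [hcomm x a, hz]
    _ = μ • (x * a) := by rw [ha, smul_mul_assoc, hcomm]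

theorem exists_hasEigenvalue_mulLeft_of_central [SMulCommClass ℝ J J] [FiniteDimensional ℝ J]
    [Nontrivial J]
    (hcomm : ∀ a b : J, a * b = b * a)
    (hformallyreal : ∀ a b : J, a * a + b * b = 0 → a = 0 ∧ b = 0) {z : J}
    (hz : ∀ a b : J, z * (a * b) = z * a * b) :
    ∃ μ : ℝ, Module.End.HasEigenvalue (LinearMap.mulLeft ℝ z) μ := by
  refine (Module.End.exists_hasEigenvalue_or_sq_sub_smul_one_apply _).resolve_right ?_
  rintro ⟨r, b, hb, u, hu, hru⟩
  set z' := z - r • (1 : J)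
  have hmul : ∀ v, (LinearMap.mulLeft ℝ z - r • 1) v = z' * v := fun v => by
    simp [z', sub_mul]
  rw [hmul, hmul] at hru
  have hsum : z' * u * (z' * u) + b • u * (b • u) = 0 := by
    rw [mul_mul_self_of_central hcomm (sub_smul_one_mul_mul hz r) u, hru]
    simp only [smul_mul_assoc, mul_smul_comm, smul_smul]
    module
  exact smul_ne_zero hb hu (hformallyreal _ _ hsum).2

end CentralElement

theorem center_of_simple_euclidean_jordan_algebra_general
    (J : Type*) [NonAssocRing J] [Module ℝ J]
    [SMulCommClass ℝ J J] [IsScalarTower ℝ J J] [FiniteDimensional ℝ J]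
    [Nontrivial J]
    (hcomm : ∀ a b : J, a * b = b * a)
    (hformallyreal : ∀ a b : J, a * a + b * b = 0 → a = 0 ∧ b = 0)
    (hsimple : ∀ I : Submodule ℝ J, (∀ x : J, ∀ a ∈ I, x * a ∈ I) → I = ⊥ ∨ I = ⊤) :
    {z : J | ∀ a b : J, z * (a * b) = (z * a) * b} =
      Set.range (fun r : ℝ => r • (1 : J)) := by
  ext z
  constructor
  · intro hz
    obtain ⟨μ, hμ⟩ := exists_hasEigenvalue_mulLeft_of_central hcomm hformallyreal hz
    rcases hsimple _ (fun x _ ha => mul_mem_eigenspace_mulLeft hcomm hz μ x ha) with hbot | htop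
    · exact absurd hbot hμ
    · have hone := Module.End.mem_eigenspace_iff.mp (htop ▸ Submodule.mem_top (x := (1 : J)))
      exact ⟨μ, by rwa [LinearMap.mulLeft_apply, mul_one, eq_comm] at hone⟩
  · rintro ⟨r, rfl⟩ a b
    simp only [smul_mul_assoc, one_mul]

/-- The center of a simple Euclidean Jordan algebra `J` (the set of `z` with
`z * (a * b) = (z * a) * b` for all `a, b`) is exactly `ℝ • 1`. Here simplicity
means that the only ideals (submodules stable by multiplication) are `⊥` and `⊤`. -/
theorem center_of_simple_euclidean_jordan_algebra
    (J : Type*) [NonAssocRing J] [Module ℝ J]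
    [SMulCommClass ℝ J J] [IsScalarTower ℝ J J] [FiniteDimensional ℝ J]
    [Nontrivial J]
    (hcomm : ∀ a b : J, a * b = b * a)
    (hjordan : ∀ a b : J, a * (b * (a * a)) = (a * b) * (a * a))
    (hformallyreal : ∀ a b : J, a * a + b * b = 0 → a = 0 ∧ b = 0)
    (hsimple : ∀ I : Submodule ℝ J, (∀ x : J, ∀ a ∈ I, x * a ∈ I) → I = ⊥ ∨ I = ⊤) :
    {z : J | ∀ a b : J, z * (a * b) = (z * a) * b} =
      Set.range (fun r : ℝ => r • (1 : J)) :=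
  center_of_simple_euclidean_jordan_algebra_general J hcomm hformallyreal hsimple
end
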